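/- arXiv:2512.15416 — 2 statements merged into one kernel-verified Lean document; each statement's English description precedes it below -/
import Mathlib

section
/- Let N be a closed Riemannian manifold and f, g smooth functions on [0,ε]×N. Write f_t(x) = f(t,x) and g_t(x) = g(t,x). Then for 0 ≤ t < ε: |∫_N f_ε g_ε dV_N − ∫_N f_t g_t dV_N| ≤ (ε−t)^{1/2} · [ (∫_{[t,ε]×N} |df|² dV)^{1/2} (∫_N g_ε² dV_N)^{1/2} + (∫_{[t,ε]×N} |dg|² dV)^{1/2} (∫_N f_t² dV_N)^{1/2} ]. -/
open MeasureTheory Set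

/-- Cauchy–Schwarz for real integrals. -/
lemma cs_aux {α : Type*} [MeasurableSpace α] {μ : Measure α} {f g : α → ℝ}
    (hf : MemLp f 2 μ) (hg : MemLp g 2 μ) :
    |∫ a, f a * g a ∂μ| ≤ Real.sqrt (∫ a, f a ^ 2 ∂μ) * Real.sqrt (∫ a, g a ^ 2 ∂μ) := by
  have hpq : Real.HolderConjugate 2 2 := Real.HolderConjugate.two_two
  have h2 : (ENNReal.ofReal 2) = 2 := by simp [ENNReal.ofReal_ofNat]
  have key := integral_mul_norm_le_Lp_mul_Lq hpq (h2 ▸ hf) (h2 ▸ hg)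
  have e1 : ∀ a, ‖f a‖ ^ (2:ℝ) = f a ^ 2 := by
    intro a
    rw [show (2:ℝ) = ((2:ℕ):ℝ) by norm_num, Real.rpow_natCast]
    simp [sq_abs, Real.norm_eq_abs]
  have e2 : ∀ a, ‖g a‖ ^ (2:ℝ) = g a ^ 2 := by
    intro a
    rw [show (2:ℝ) = ((2:ℕ):ℝ) by norm_num, Real.rpow_natCast]
    simp [sq_abs, Real.norm_eq_abs]
  simp_rw [e1, e2] at key
  calc |∫ a, f a * g a ∂μ| ≤ ∫ a, ‖f a * g a‖ ∂μ := by
        rw [← Real.norm_eq_abs]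
        exact norm_integral_le_integral_norm _
    _ = ∫ a, ‖f a‖ * ‖g a‖ ∂μ := by simp [norm_mul]
    _ ≤ (∫ a, f a ^ 2 ∂μ) ^ (1 / (2:ℝ)) * (∫ a, g a ^ 2 ∂μ) ^ (1 / (2:ℝ)) := key
    _ = Real.sqrt (∫ a, f a ^ 2 ∂μ) * Real.sqrt (∫ a, g a ^ 2 ∂μ) := by
        rw [Real.sqrt_eq_rpow, Real.sqrt_eq_rpow]

/-- Cauchy–Schwarz with the constant function 1 on an interval. -/
lemma sq_intervalIntegral_le {t ε : ℝ} (hle : t ≤ ε) {F : ℝ → ℝ} (hF : Continuous F) :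
    (∫ s in t..ε, F s) ^ 2 ≤ (ε - t) * ∫ s in t..ε, (F s) ^ 2 := by
  set μ := volume.restrict (Ioc t ε) with hμ
  haveI hfin : IsFiniteMeasure μ := ⟨by
    rw [hμ, Measure.restrict_apply_univ, Real.volume_Ioc]
    exact ENNReal.ofReal_lt_top⟩
  obtain ⟨C, hC⟩ := isCompact_Icc.exists_bound_of_continuousOn (hF.continuousOn (s := Icc t ε))
  have hmem : MemLp F 2 μ := by
    refine MemLp.of_bound hF.aestronglyMeasurable C ?_
    exact (ae_restrict_mem measurableSet_Ioc).mono fun x hx => hC x (Ioc_subset_Icc_self hx)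
  have h1 : MemLp (fun _ : ℝ => (1:ℝ)) 2 μ := memLp_const 1
  have key := cs_aux h1 hmem
  have hμu : (μ Set.univ).toReal = ε - t := by
    rw [hμ, Measure.restrict_apply_univ, Real.volume_Ioc, ENNReal.toReal_ofReal (by linarith)]
  have e1 : ∫ a, (1:ℝ) * F a ∂μ = ∫ a, F a ∂μ := by simp
  have e2 : ∫ _a, (1:ℝ) ^ 2 ∂μ = ε - t := by
    simp [integral_const, Measure.real, hμu]
  rw [e1, e2] at key
  have hint : ∫ s in t..ε, F s = ∫ a, F a ∂μ := intervalIntegral.integral_of_le hle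
  have hint2 : ∫ s in t..ε, (F s) ^ 2 = ∫ a, (F a) ^ 2 ∂μ := intervalIntegral.integral_of_le hle
  rw [hint, hint2]
  have hnn : 0 ≤ ∫ a, (F a) ^ 2 ∂μ := integral_nonneg fun a => sq_nonneg _
  calc (∫ a, F a ∂μ) ^ 2 = |∫ a, F a ∂μ| ^ 2 := (sq_abs _).symm
    _ ≤ (Real.sqrt (ε - t) * Real.sqrt (∫ a, (F a) ^ 2 ∂μ)) ^ 2 := by
        apply pow_le_pow_left₀ (abs_nonneg _) key
    _ = (ε - t) * ∫ a, (F a) ^ 2 ∂μ := by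
        rw [mul_pow, Real.sq_sqrt (by linarith), Real.sq_sqrt hnn]

/-- Lemma 2.2: for smooth functions `f, g` on `[0,ε] × N` (with `N` a closed manifold
modelled by a compact space with a finite Borel measure `ν`), with `f', g'` the partial
derivatives in the interval variable and `df2 = |df|²`, `dg2 = |dg|²` the squared norms
of the full differentials (which dominate the squared partial derivatives), for
`0 ≤ t < ε` the boundary-pairing difference obeys the stated estimate. -/
theorem stmt2 {N : Type*} [TopologicalSpace N] [CompactSpace N]
    [MeasurableSpace N] [BorelSpace N] (ν : Measure N) [IsFiniteMeasure ν]
    (ε t : ℝ) (hε : 0 < ε) (ht : 0 ≤ t) (htε : t < ε)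
    (f g f' g' df2 dg2 : ℝ → N → ℝ)
    (hf : Continuous (fun p : ℝ × N => f p.1 p.2))
    (hg : Continuous (fun p : ℝ × N => g p.1 p.2))
    (hf' : Continuous (fun p : ℝ × N => f' p.1 p.2))
    (hg' : Continuous (fun p : ℝ × N => g' p.1 p.2))
    (hdf2 : Continuous (fun p : ℝ × N => df2 p.1 p.2))
    (hdg2 : Continuous (fun p : ℝ × N => dg2 p.1 p.2))
    (hderivf : ∀ x, ∀ s ∈ Set.Icc 0 ε, HasDerivAt (fun s => f s x) (f' s x) s)
    (hderivg : ∀ x, ∀ s ∈ Set.Icc 0 ε, HasDerivAt (fun s => g s x) (g' s x) s)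
    (hdomf : ∀ s ∈ Set.Icc 0 ε, ∀ x, (f' s x) ^ 2 ≤ df2 s x)
    (hdomg : ∀ s ∈ Set.Icc 0 ε, ∀ x, (g' s x) ^ 2 ≤ dg2 s x) :
    |(∫ x, f ε x * g ε x ∂ν) - ∫ x, f t x * g t x ∂ν|
      ≤ Real.sqrt (ε - t) *
        (Real.sqrt (∫ s in t..ε, ∫ x, df2 s x ∂ν) * Real.sqrt (∫ x, (g ε x) ^ 2 ∂ν)
          + Real.sqrt (∫ s in t..ε, ∫ x, dg2 s x ∂ν) * Real.sqrt (∫ x, (f t x) ^ 2 ∂ν)) := by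
  have hle : t ≤ ε := htε.le
  have hsub : Icc t ε ⊆ Icc 0 ε := Icc_subset_Icc ht le_rfl
  -- slice continuity
  have slice : ∀ (h : ℝ → N → ℝ), Continuous (fun p : ℝ × N => h p.1 p.2) →
      (∀ s, Continuous fun x => h s x) ∧ (∀ x, Continuous fun s => h s x) := by
    intro h hc
    exact ⟨fun s => hc.comp (continuous_const.prodMk continuous_id),
      fun x => hc.comp (continuous_id.prodMk continuous_const)⟩
  obtain ⟨cfN, cfR⟩ := slice f hf
  obtain ⟨cgN, cgR⟩ := slice g hg
  obtain ⟨cf'N, cf'R⟩ := slice f' hf'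
  obtain ⟨cg'N, cg'R⟩ := slice g' hg'
  obtain ⟨cdf2N, cdf2R⟩ := slice df2 hdf2
  obtain ⟨cdg2N, cdg2R⟩ := slice dg2 hdg2
  -- Memℒp 2 and integrability for continuous functions on N
  have mem2 : ∀ φ : N → ℝ, Continuous φ → MemLp φ 2 ν := by
    intro φ hφ
    obtain ⟨C, hC⟩ := isCompact_univ.exists_bound_of_continuousOn (hφ.continuousOn (s := univ))
    exact MemLp.of_bound hφ.aestronglyMeasurable C (ae_of_all _ fun x => hC x trivial)
  have intN : ∀ φ : N → ℝ, Continuous φ → Integrable φ ν := fun φ hφ =>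
    (mem2 φ hφ).integrable (by norm_num)
  -- FTC
  have ftc : ∀ (h h' : ℝ → N → ℝ), (∀ x, Continuous fun s => h' s x) →
      (∀ x, ∀ s ∈ Icc 0 ε, HasDerivAt (fun s => h s x) (h' s x) s) →
      ∀ x, h ε x - h t x = ∫ s in t..ε, h' s x := by
    intro h h' hc hd x
    refine (intervalIntegral.integral_eq_sub_of_hasDerivAt (fun s hs => hd x s ?_)
      ((hc x).intervalIntegrable t ε)).symm
    rw [uIcc_of_le hle] at hs
    exact hsub hs
  -- product integrability over (volume.restrict (Ioc t ε)).prod ν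
  haveI hfin : IsFiniteMeasure (volume.restrict (Ioc t ε)) := ⟨by
    rw [Measure.restrict_apply_univ, Real.volume_Ioc]
    exact ENNReal.ofReal_lt_top⟩
  have intprod : ∀ (h : ℝ → N → ℝ), Continuous (fun p : ℝ × N => h p.1 p.2) →
      Integrable (fun p : ℝ × N => h p.1 p.2) ((volume.restrict (Ioc t ε)).prod ν) := by
    intro h hc
    obtain ⟨C, hC⟩ := (isCompact_Icc.prod isCompact_univ).exists_bound_of_continuousOn
      (hc.continuousOn (s := Icc t ε ×ˢ (univ : Set N)))
    refine Integrable.mono' (integrable_const C) hc.aestronglyMeasurable ?_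
    have hr : (volume.restrict (Ioc t ε)).prod ν = (volume.prod ν).restrict (Ioc t ε ×ˢ univ) := by
      rw [← Measure.restrict_univ (μ := ν), Measure.restrict_prod_eq_prod_univ,
        Measure.restrict_univ]
    rw [hr]
    exact (ae_restrict_mem (measurableSet_Ioc.prod MeasurableSet.univ)).mono
      fun p hp => hC p ⟨Ioc_subset_Icc_self hp.1, trivial⟩
  -- Fubini swap
  have swap : ∀ (h : ℝ → N → ℝ), Continuous (fun p : ℝ × N => h p.1 p.2) →
      (∫ x, (∫ s in t..ε, h s x) ∂ν) = ∫ s in t..ε, ∫ x, h s x ∂ν := by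
    intro h hc
    have hI := (intprod h hc).swap
    simp_rw [intervalIntegral.integral_of_le hle]
    exact integral_integral_swap hI
  have intswap : ∀ (h : ℝ → N → ℝ), Continuous (fun p : ℝ × N => h p.1 p.2) →
      Integrable (fun x => ∫ s in t..ε, h s x) ν := by
    intro h hc
    have := (intprod h hc).integral_prod_right
    simpa [intervalIntegral.integral_of_le hle] using this
  -- pointwise key bound
  have key : ∀ (h h' h2 : ℝ → N → ℝ), (∀ x, Continuous fun s => h' s x) →
      (∀ x, Continuous fun s => h2 s x) →
      (∀ x, ∀ s ∈ Icc 0 ε, HasDerivAt (fun s => h s x) (h' s x) s) →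
      (∀ s ∈ Icc 0 ε, ∀ x, (h' s x) ^ 2 ≤ h2 s x) →
      ∀ x, (h ε x - h t x) ^ 2 ≤ (ε - t) * ∫ s in t..ε, h2 s x := by
    intro h h' h2 hc' hc2 hd hdom x
    rw [ftc h h' hc' hd x]
    calc (∫ s in t..ε, h' s x) ^ 2 ≤ (ε - t) * ∫ s in t..ε, (h' s x) ^ 2 :=
          sq_intervalIntegral_le hle (hc' x)
      _ ≤ (ε - t) * ∫ s in t..ε, h2 s x := by
          refine mul_le_mul_of_nonneg_left ?_ (by linarith)
          refine intervalIntegral.integral_mono_on hle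
            (((hc' x).pow 2).intervalIntegrable t ε) ((hc2 x).intervalIntegrable t ε) ?_
          exact fun s hs => hdom s (hsub hs) x
  -- L² bounds for the differences
  have L2bound : ∀ (h h' h2 : ℝ → N → ℝ),
      Continuous (fun p : ℝ × N => h p.1 p.2) → Continuous (fun p : ℝ × N => h2 p.1 p.2) →
      (∀ x, Continuous fun s => h' s x) →
      (∀ x, ∀ s ∈ Icc 0 ε, HasDerivAt (fun s => h s x) (h' s x) s) →
      (∀ s ∈ Icc 0 ε, ∀ x, (h' s x) ^ 2 ≤ h2 s x) →
      ∫ x, (h ε x - h t x) ^ 2 ∂ν ≤ (ε - t) * ∫ s in t..ε, ∫ x, h2 s x ∂ν := by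
    intro h h' h2 hc hc2 hc' hd hdom
    obtain ⟨hN, hR⟩ := slice h hc
    obtain ⟨h2N, h2R⟩ := slice h2 hc2
    calc ∫ x, (h ε x - h t x) ^ 2 ∂ν
        ≤ ∫ x, ((ε - t) * ∫ s in t..ε, h2 s x) ∂ν := by
          refine integral_mono (intN _ (((hN ε).sub (hN t)).pow 2))
            ((intswap h2 hc2).const_mul _) ?_
          exact key h h' h2 hc' h2R hd hdom
      _ = (ε - t) * ∫ x, (∫ s in t..ε, h2 s x) ∂ν := integral_const_mul _ _
      _ = (ε - t) * ∫ s in t..ε, ∫ x, h2 s x ∂ν := by rw [swap h2 hc2]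
  have bndf := L2bound f f' df2 hf hdf2 cf'R hderivf hdomf
  have bndg := L2bound g g' dg2 hg hdg2 cg'R hderivg hdomg
  -- decompose the difference
  have intA : Integrable (fun x => (f ε x - f t x) * g ε x) ν :=
    intN _ (((cfN ε).sub (cfN t)).mul (cgN ε))
  have intB : Integrable (fun x => f t x * (g ε x - g t x)) ν :=
    intN _ ((cfN t).mul ((cgN ε).sub (cgN t)))
  have D : (∫ x, f ε x * g ε x ∂ν) - ∫ x, f t x * g t x ∂ν
      = (∫ x, (f ε x - f t x) * g ε x ∂ν) + ∫ x, f t x * (g ε x - g t x) ∂ν := by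
    rw [← integral_add intA intB, ← integral_sub (intN (fun x => f ε x * g ε x) ((cfN ε).mul (cgN ε)))
      (intN (fun x => f t x * g t x) ((cfN t).mul (cgN t)))]
    congr 1
    ext x
    ring
  rw [D]
  have csA := cs_aux (mem2 _ (((cfN ε).sub (cfN t)))) (mem2 _ (cgN ε))
  have csB := cs_aux (mem2 _ (cfN t)) (mem2 _ (((cgN ε).sub (cgN t))))
  have sqA : Real.sqrt (∫ x, (f ε x - f t x) ^ 2 ∂ν)
      ≤ Real.sqrt (ε - t) * Real.sqrt (∫ s in t..ε, ∫ x, df2 s x ∂ν) := by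
    rw [← Real.sqrt_mul (by linarith)]
    exact Real.sqrt_le_sqrt bndf
  have sqB : Real.sqrt (∫ x, (g ε x - g t x) ^ 2 ∂ν)
      ≤ Real.sqrt (ε - t) * Real.sqrt (∫ s in t..ε, ∫ x, dg2 s x ∂ν) := by
    rw [← Real.sqrt_mul (by linarith)]
    exact Real.sqrt_le_sqrt bndg
  calc |(∫ x, (f ε x - f t x) * g ε x ∂ν) + ∫ x, f t x * (g ε x - g t x) ∂ν|
      ≤ |∫ x, (f ε x - f t x) * g ε x ∂ν| + |∫ x, f t x * (g ε x - g t x) ∂ν| := abs_add_le _ _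
    _ ≤ Real.sqrt (∫ x, (f ε x - f t x) ^ 2 ∂ν) * Real.sqrt (∫ x, (g ε x) ^ 2 ∂ν)
        + Real.sqrt (∫ x, (f t x) ^ 2 ∂ν) * Real.sqrt (∫ x, (g ε x - g t x) ^ 2 ∂ν) :=
        add_le_add csA csB
    _ ≤ (Real.sqrt (ε - t) * Real.sqrt (∫ s in t..ε, ∫ x, df2 s x ∂ν))
          * Real.sqrt (∫ x, (g ε x) ^ 2 ∂ν)
        + Real.sqrt (∫ x, (f t x) ^ 2 ∂ν)
          * (Real.sqrt (ε - t) * Real.sqrt (∫ s in t..ε, ∫ x, dg2 s x ∂ν)) := by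
        exact add_le_add (mul_le_mul_of_nonneg_right sqA (Real.sqrt_nonneg _))
          (mul_le_mul_of_nonneg_left sqB (Real.sqrt_nonneg _))
    _ = Real.sqrt (ε - t) *
        (Real.sqrt (∫ s in t..ε, ∫ x, df2 s x ∂ν) * Real.sqrt (∫ x, (g ε x) ^ 2 ∂ν)
          + Real.sqrt (∫ s in t..ε, ∫ x, dg2 s x ∂ν) * Real.sqrt (∫ x, (f t x) ^ 2 ∂ν)) := by
        ring
end

section
/- With σ(μ) as the smallest eigenvalue of the Steklov–Helmholtz problem −Δa + μa = 0 in Ω, ∂_ν a = σ a on ∂Ω, and f_μ a corresponding eigenfunction normalized by ∫_{∂Ω} f_μ² dA = 1, assume μ ↦ (σ(μ), f_μ) is differentiable. Then σ'(μ) = ∫_Ω f_μ² dV. In particular σ'(0) = |Ω|/|∂Ω|. -/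
/-- Derivative of the first Steklov–Helmholtz eigenvalue.  The Dirichlet form
`d(u,v) = ∫_Ω ∇u·∇v`, the mass form `m(u,v) = ∫_Ω u v` and the boundary form
`b(u,v) = ∫_{∂Ω} u v` are symmetric continuous bilinear forms on the space `V` of
trial functions.  If `μ ↦ f μ` is a differentiable family of eigenfunctions
normalised by `b(f μ, f μ) = 1`, satisfying the weak eigenvalue equation
`d(f μ, v) + μ m(f μ, v) = σ(μ) b(f μ, v)` for all `v`, and
`σ(μ) = d(f μ, f μ) + μ m(f μ, f μ)`, then `σ'(μ) = m(f μ, f μ) (= ∫_Ω f_μ²)`;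
in particular, since `m(f 0, f 0) = |Ω|/|∂Ω|`, `σ'(0) = |Ω|/|∂Ω|`. -/
theorem stmt8 {V : Type*} [NormedAddCommGroup V] [NormedSpace ℝ V]
    (d m b : V →L[ℝ] V →L[ℝ] ℝ)
    (hdsymm : ∀ u v, d u v = d v u) (hmsymm : ∀ u v, m u v = m v u)
    (hbsymm : ∀ u v, b u v = b v u)
    (f f' : ℝ → V) (hf : ∀ μ, HasDerivAt f (f' μ) μ)
    (σ : ℝ → ℝ)
    (hσ : ∀ μ, σ μ = d (f μ) (f μ) + μ * m (f μ) (f μ))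
    (hweak : ∀ μ v, d (f μ) v + μ * m (f μ) v = σ μ * b (f μ) v)
    (hnorm : ∀ μ, b (f μ) (f μ) = 1)
    (volΩ volB : ℝ) (hvol : 0 < volΩ) (hvB : 0 < volB)
    (hm0 : m (f 0) (f 0) = volΩ / volB) :
    (∀ μ, HasDerivAt σ (m (f μ) (f μ)) μ) ∧ HasDerivAt σ (volΩ / volB) 0 := by
  have key : ∀ μ, HasDerivAt σ (m (f μ) (f μ)) μ := by
    intro μ
    -- derivative of t ↦ Q (f t) (f t) for a bilinear form Q
    have hbil : ∀ Q : V →L[ℝ] V →L[ℝ] ℝ,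
        HasDerivAt (fun t => Q (f t) (f t)) (Q (f' μ) (f μ) + Q (f μ) (f' μ)) μ := by
      intro Q
      have h1 : HasDerivAt (fun t => Q (f t)) (Q (f' μ)) μ :=
        Q.hasFDerivAt.comp_hasDerivAt μ (hf μ)
      exact h1.clm_apply (hf μ)
    have hd := hbil d
    have hm := hbil m
    have hb := hbil b
    -- differentiate the normalization
    have hb0 : b (f μ) (f' μ) = 0 := by
      have hconst : HasDerivAt (fun t => b (f t) (f t)) 0 μ := by
        have : (fun t => b (f t) (f t)) = fun _ => (1 : ℝ) := funext fun t => hnorm t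
        rw [this]; exact hasDerivAt_const μ 1
      have := hconst.unique hb
      have hsym : b (f' μ) (f μ) = b (f μ) (f' μ) := hbsymm _ _
      linarith
    -- weak equation at v = f' μ
    have hw : d (f μ) (f' μ) + μ * m (f μ) (f' μ) = 0 := by
      have := hweak μ (f' μ); rw [hb0] at this; linarith
    have hμ : HasDerivAt (fun t => t * m (f t) (f t))
        (1 * m (f μ) (f μ) + μ * (m (f' μ) (f μ) + m (f μ) (f' μ))) μ :=
      (hasDerivAt_id μ).mul hm
    have htot := hd.add hμ
    have hfun : σ = fun t => d (f t) (f t) + t * m (f t) (f t) := funext hσ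
    rw [hfun]
    convert htot using 1
    · rfl
    · rfl
    · rfl
    have h1 : d (f' μ) (f μ) = d (f μ) (f' μ) := hdsymm _ _
    have h2 : m (f' μ) (f μ) = m (f μ) (f' μ) := hmsymm _ _
    rw [h1, h2]; ring_nf; linarith
  exact ⟨key, hm0 ▸ key 0⟩
end
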